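/- arXiv:1711.03752 — 5 statements merged into one kernel-verified Lean document; each statement's English description precedes it below -/
import Mathlib

section
/- For nonempty closed subsets S, T of [0,1] with min S ≤ min T, the set S ∪_S T := (S ∩ [min T, max S]) ∪ T is an upper bound of both S and T with respect to ≤_S. -/
/-- The relation `≤_S`: `S ≤_S T` iff `max S ≤ max T`, `min S ≤ min T`
and `S ∩ [min T, max S] ⊆ T`. -/
noncomputable def leS (S T : Set ℝ) : Prop :=
  sSup S ≤ sSup T ∧ sInf S ≤ sInf T ∧ S ∩ Set.Icc (sInf T) (sSup S) ⊆ T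

/-- The set `S ∪_S T`. -/
def unionS (S T : Set ℝ) : Set ℝ :=
  S ∩ Set.Icc (sInf T) (sSup S) ∪ T

section unionS

variable {S T : Set ℝ}

lemma subset_unionS_right : T ⊆ unionS S T := Set.subset_union_right

lemma bddAbove_unionS (hS : BddAbove S) (hT : BddAbove T) : BddAbove (unionS S T) :=
  (hS.mono Set.inter_subset_left).union hT

lemma sInf_le_of_mem_unionS (hT : BddBelow T) {x : ℝ} (hx : x ∈ unionS S T) : sInf T ≤ x := by
  rcases hx with hx | hx
  · exact hx.2.1
  · exact csInf_le hT hx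

lemma sInf_unionS (hTne : T.Nonempty) (hT : BddBelow T) : sInf (unionS S T) = sInf T :=
  le_antisymm
    (csInf_le_csInf ⟨sInf T, fun _ => sInf_le_of_mem_unionS hT⟩ hTne subset_unionS_right)
    (le_csInf (hTne.mono subset_unionS_right) fun _ => sInf_le_of_mem_unionS hT)

lemma sSup_le_sSup_unionS_right (hTne : T.Nonempty) (hSa : BddAbove S) (hTa : BddAbove T) :
    sSup T ≤ sSup (unionS S T) :=
  csSup_le_csSup (bddAbove_unionS hSa hTa) hTne subset_unionS_right

/-- Either `max S` survives in `S ∩ [min T, max S]`, or `max S < min T ≤ max T`. -/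
lemma sSup_le_sSup_unionS_left (hSc : IsClosed S) (hSne : S.Nonempty) (hTne : T.Nonempty)
    (hSa : BddAbove S) (hTa : BddAbove T) (hTb : BddBelow T) :
    sSup S ≤ sSup (unionS S T) := by
  rcases le_or_gt (sInf T) (sSup S) with hle | hlt
  · have hmem : sSup S ∈ unionS S T :=
      Or.inl ⟨hSc.csSup_mem hSne hSa, hle, le_rfl⟩
    exact le_csSup (bddAbove_unionS hSa hTa) hmem
  · calc sSup S ≤ sInf T := hlt.le
      _ ≤ sSup T := csInf_le_csSup hTne hTb hTa
      _ ≤ sSup (unionS S T) := sSup_le_sSup_unionS_right hTne hSa hTa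

lemma leS_unionS_left (hSc : IsClosed S) (hSne : S.Nonempty) (hTne : T.Nonempty)
    (hSa : BddAbove S) (hTa : BddAbove T) (hTb : BddBelow T) (h : sInf S ≤ sInf T) :
    leS S (unionS S T) := by
  refine ⟨sSup_le_sSup_unionS_left hSc hSne hTne hSa hTa hTb, ?_, ?_⟩
  · rwa [sInf_unionS hTne hTb]
  · rw [sInf_unionS hTne hTb]
    exact Set.subset_union_left

lemma leS_unionS_right (hTne : T.Nonempty) (hSa : BddAbove S) (hTa : BddAbove T)
    (hTb : BddBelow T) : leS T (unionS S T) :=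
  ⟨sSup_le_sSup_unionS_right hTne hSa hTa, (sInf_unionS hTne hTb).ge,
    fun _ hx => subset_unionS_right hx.1⟩

end unionS

theorem stmt_9_general (S T : Set ℝ) (hSne : S.Nonempty) (hTne : T.Nonempty)
    (hS : S ⊆ Set.Icc 0 1) (hT : T ⊆ Set.Icc 0 1)
    (hSc : IsClosed S) (h : sInf S ≤ sInf T) :
    leS S ((S ∩ Set.Icc (sInf T) (sSup S)) ∪ T) ∧
    leS T ((S ∩ Set.Icc (sInf T) (sSup S)) ∪ T) := by
  have hSa : BddAbove S := bddAbove_Icc.mono hS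
  have hTa : BddAbove T := bddAbove_Icc.mono hT
  have hTb : BddBelow T := bddBelow_Icc.mono hT
  exact ⟨leS_unionS_left hSc hSne hTne hSa hTa hTb h, leS_unionS_right hTne hSa hTa hTb⟩

theorem stmt_9 (S T : Set ℝ) (hSne : S.Nonempty) (hTne : T.Nonempty)
    (hS : S ⊆ Set.Icc 0 1) (hT : T ⊆ Set.Icc 0 1)
    (hSc : IsClosed S) (hTc : IsClosed T) (h : sInf S ≤ sInf T) :
    leS S ((S ∩ Set.Icc (sInf T) (sSup S)) ∪ T) ∧
    leS T ((S ∩ Set.Icc (sInf T) (sSup S)) ∪ T) :=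
  stmt_9_general S T hSne hTne hS hT hSc h
end

section
/- For nonempty closed subsets S, T of [0,1] with min S ≤ min T, the set S ∪_S T := (S ∩ [min T, max S]) ∪ T is the least upper bound of S and T with respect to ≤_S: any nonempty closed J with S ≤_S J and T ≤_S J satisfies (S ∪_S T) ≤_S J. -/
open Set

section InterIccUnion

variable {α : Type*} [ConditionallyCompleteLinearOrder α] {S T : Set α} {b : α}

theorem csInf_inter_Icc_csInf_union_eq (hT : T.Nonempty) (hTb : BddBelow T) :
    sInf (S ∩ Icc (sInf T) b ∪ T) = sInf T := by
  refine IsGLB.csInf_eq ⟨?_, fun l hl ↦ le_csInf hT fun x hx ↦ hl (Or.inr hx)⟩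
    (hT.mono subset_union_right)
  rintro x (⟨-, hTx, -⟩ | hxT)
  exacts [hTx, csInf_le hTb hxT]

theorem csSup_inter_Icc_union_le {a c : α} (hT : T.Nonempty) (hTa : BddAbove T) (hb : b ≤ c)
    (hTc : sSup T ≤ c) : sSup (S ∩ Icc a b ∪ T) ≤ c := by
  refine csSup_le (hT.mono subset_union_right) ?_
  rintro x (⟨-, -, hxb⟩ | hxT)
  exacts [hxb.trans hb, (le_csSup hTa hxT).trans hTc]

end InterIccUnion

theorem stmt_10_general (S T : Set ℝ) (hTne : T.Nonempty)
    (hT : T ⊆ Set.Icc 0 1) :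
    ∀ J : Set ℝ, J.Nonempty → J ⊆ Set.Icc 0 1 → IsClosed J →
      leS S J → leS T J → leS ((S ∩ Set.Icc (sInf T) (sSup S)) ∪ T) J := by
  intro J _ _ _ hSJ hTJ
  have hTa : BddAbove T := bddAbove_Icc.mono hT
  have hTb : BddBelow T := bddBelow_Icc.mono hT
  refine ⟨csSup_inter_Icc_union_le hTne hTa hSJ.1 hTJ.1, ?_, ?_⟩
  · rw [csInf_inter_Icc_csInf_union_eq hTne hTb]
    exact hTJ.2.1
  · rintro x ⟨⟨hxS, -, hxS_le⟩ | hxT, hJx, -⟩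
    · exact hSJ.2.2 ⟨hxS, hJx, hxS_le⟩
    · exact hTJ.2.2 ⟨hxT, hJx, le_csSup hTa hxT⟩

theorem stmt_10 (S T : Set ℝ) (hSne : S.Nonempty) (hTne : T.Nonempty)
    (hS : S ⊆ Set.Icc 0 1) (hT : T ⊆ Set.Icc 0 1)
    (hSc : IsClosed S) (hTc : IsClosed T) (h : sInf S ≤ sInf T) :
    ∀ J : Set ℝ, J.Nonempty → J ⊆ Set.Icc 0 1 → IsClosed J →
      leS S J → leS T J → leS ((S ∩ Set.Icc (sInf T) (sSup S)) ∪ T) J :=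
  stmt_10_general S T hTne hT
end

section
/- For nonempty closed subsets S, T of [0,1] with min S ≤ min T, the set S ∩_S T := S ∩ ([min S, min T] ∪ T) is a nonempty closed lower bound of both S and T with respect to ≤_S. -/
/-- The meet `S ∩_S T` of the paper. -/
noncomputable def meetS (S T : Set ℝ) : Set ℝ :=
  S ∩ (Set.Icc (sInf S) (sInf T) ∪ T)

section meetS

variable {S T : Set ℝ}

theorem meetS_subset_left : meetS S T ⊆ S :=
  Set.inter_subset_left

theorem sInf_mem_meetS (hS : sInf S ∈ S) (h : sInf S ≤ sInf T) : sInf S ∈ meetS S T :=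
  ⟨hS, Or.inl ⟨le_rfl, h⟩⟩

theorem IsClosed.meetS (hS : IsClosed S) (hT : IsClosed T) : IsClosed (meetS S T) :=
  hS.inter (isClosed_Icc.union hT)

theorem sInf_meetS (hS : IsLeast S (sInf S)) (h : sInf S ≤ sInf T) :
    sInf (meetS S T) = sInf S :=
  IsLeast.csInf_eq ⟨sInf_mem_meetS hS.1 h, fun _ hx => hS.2 (meetS_subset_left hx)⟩

theorem leS_of_subset {M : Set ℝ} (hS : BddAbove S) (hM : M.Nonempty) (hMS : M ⊆ S)
    (hinf : sInf M ≤ sInf S) : leS M S :=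
  ⟨csSup_le_csSup hS hM hMS, hinf, fun _ hx => hMS hx.1⟩

theorem leS_meetS_left (hS : IsLeast S (sInf S)) (hS' : BddAbove S) (h : sInf S ≤ sInf T) :
    leS (meetS S T) S :=
  leS_of_subset hS' ⟨_, sInf_mem_meetS hS.1 h⟩ meetS_subset_left (sInf_meetS hS h).le

theorem leS_meetS_right (hS : IsLeast S (sInf S)) (hT : IsLeast T (sInf T)) (hT' : BddAbove T)
    (h : sInf S ≤ sInf T) : leS (meetS S T) T := by
  refine ⟨?_, (sInf_meetS hS h).trans_le h, ?_⟩
  · refine csSup_le ⟨_, sInf_mem_meetS hS.1 h⟩ fun x ⟨_, hx⟩ => ?_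
    rcases hx with hx | hx
    · exact hx.2.trans (le_csSup hT' hT.1)
    · exact le_csSup hT' hx
  · rintro x ⟨⟨_, hx | hx⟩, hTx, -⟩
    · exact le_antisymm hx.2 hTx ▸ hT.1
    · exact hx

end meetS

theorem stmt_11 (S T : Set ℝ) (hSne : S.Nonempty) (hTne : T.Nonempty)
    (hS : S ⊆ Set.Icc 0 1) (hT : T ⊆ Set.Icc 0 1)
    (hSc : IsClosed S) (hTc : IsClosed T) (h : sInf S ≤ sInf T) :
    (S ∩ (Set.Icc (sInf S) (sInf T) ∪ T)).Nonempty ∧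
    IsClosed (S ∩ (Set.Icc (sInf S) (sInf T) ∪ T)) ∧
    leS (S ∩ (Set.Icc (sInf S) (sInf T) ∪ T)) S ∧
    leS (S ∩ (Set.Icc (sInf S) (sInf T) ∪ T)) T := by
  have hScpt : IsCompact S := isCompact_Icc.of_isClosed_subset hSc hS
  have hTcpt : IsCompact T := isCompact_Icc.of_isClosed_subset hTc hT
  have hSleast := hScpt.isLeast_sInf hSne
  have hTleast := hTcpt.isLeast_sInf hTne
  exact ⟨⟨_, sInf_mem_meetS hSleast.1 h⟩, hSc.meetS hTc,
    leS_meetS_left hSleast hScpt.bddAbove h, leS_meetS_right hSleast hTleast hTcpt.bddAbove h⟩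
end

section
/- For nonempty closed subsets S, T of [0,1] with min S ≤ min T, the set S ∩_S T := S ∩ ([min S, min T] ∪ T) is the greatest lower bound of S and T with respect to ≤_S: any nonempty closed J with J ≤_S S and J ≤_S T satisfies J ≤_S (S ∩_S T). -/
open Set

namespace leS

variable {J S T : Set ℝ} {x : ℝ}

theorem mem_of_mem_Icc (hJS : leS J S) (hx : x ∈ J) (hxI : x ∈ Icc (sInf S) (sSup J)) :
    x ∈ S :=
  hJS.2.2 ⟨hx, hxI⟩

theorem mem_inter_Icc_union (hJS : leS J S) (hJT : leS J T) (hx : x ∈ J)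
    (hxI : x ∈ Icc (sInf S) (sSup J)) : x ∈ S ∩ (Icc (sInf S) (sInf T) ∪ T) := by
  refine ⟨hJS.mem_of_mem_Icc hx hxI, ?_⟩
  rcases lt_or_ge x (sInf T) with hxT | hTx
  · exact Or.inl ⟨hxI.1, hxT.le⟩
  · exact Or.inr (hJT.mem_of_mem_Icc hx ⟨hTx, hxI.2⟩)

end leS

theorem IsLeast.inter_Icc_union {S : Set ℝ} {a c : ℝ} (hS : IsLeast S a) (hac : a ≤ c)
    (T : Set ℝ) : IsLeast (S ∩ (Icc a c ∪ T)) a :=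
  ⟨⟨hS.1, Or.inl ⟨le_rfl, hac⟩⟩, fun _ hx => hS.2 hx.1⟩

theorem leS_inter_Icc_union {J S T : Set ℝ} (hS : IsLeast S (sInf S)) (hSb : BddAbove S)
    (hJ : sSup J ∈ J) (hST : sInf S ≤ sInf T) (hJS : leS J S) (hJT : leS J T) :
    leS J (S ∩ (Icc (sInf S) (sInf T) ∪ T)) := by
  have hM := hS.inter_Icc_union hST T
  have hMb : BddAbove (S ∩ (Icc (sInf S) (sInf T) ∪ T)) := hSb.mono inter_subset_left
  rw [leS, hM.csInf_eq]
  refine ⟨?_, hJS.2.1, fun _ ⟨hx, hxI⟩ => hJS.mem_inter_Icc_union hJT hx hxI⟩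
  rcases le_or_gt (sInf S) (sSup J) with hSJ | hJS_lt
  · exact le_csSup hMb (hJS.mem_inter_Icc_union hJT hJ ⟨hSJ, le_rfl⟩)
  · exact hJS_lt.le.trans (le_csSup hMb hM.1)

theorem stmt_12_general (S T : Set ℝ) (hSne : S.Nonempty)
    (hS : S ⊆ Set.Icc 0 1)
    (hSc : IsClosed S) (h : sInf S ≤ sInf T) :
    ∀ J : Set ℝ, J.Nonempty → J ⊆ Set.Icc 0 1 → IsClosed J →
      leS J S → leS J T → leS J (S ∩ (Set.Icc (sInf S) (sInf T) ∪ T)) := by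
  intro J hJne hJ hJc hJS hJT
  exact leS_inter_Icc_union (hSc.isLeast_csInf hSne (bddBelow_Icc.mono hS))
    (bddAbove_Icc.mono hS) (hJc.csSup_mem hJne (bddAbove_Icc.mono hJ)) h hJS hJT

theorem stmt_12 (S T : Set ℝ) (hSne : S.Nonempty) (hTne : T.Nonempty)
    (hS : S ⊆ Set.Icc 0 1) (hT : T ⊆ Set.Icc 0 1)
    (hSc : IsClosed S) (hTc : IsClosed T) (h : sInf S ≤ sInf T) :
    ∀ J : Set ℝ, J.Nonempty → J ⊆ Set.Icc 0 1 → IsClosed J →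
      leS J S → leS J T → leS J (S ∩ (Set.Icc (sInf S) (sInf T) ∪ T)) :=
  stmt_12_general S T hSne hS hSc h
end

section
/- The map δ preserves joins: for nonempty closed subsets C, D of [0,1], δ(C ∪_C D) = max(δ(C), δ(D)) pointwise, where C ∪_C D = (C ∩ [min D, max C]) ∪ D when min C ≤ min D (symmetric otherwise). -/
open scoped Classical

/-- The map δ: `δ(C)(t) = min C` if `t ≤ min C`, `δ(C)(t) = t` if `t > min C`
and `t ∈ C`, and `δ(C)(t) = 0` otherwise. -/

noncomputable def delta (C : Set ℝ) : ℝ → ℝ :=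
  fun t => if t ≤ sInf C then sInf C else if t ∈ C then t else 0

/-- The join `∪_C` on nonempty closed subsets of `[0,1]`. -/
noncomputable def cupC (S T : Set ℝ) : Set ℝ :=
  if sInf S ≤ sInf T then (S ∩ Set.Icc (sInf T) (sSup S)) ∪ T
  else (T ∩ Set.Icc (sInf S) (sSup T)) ∪ S

/-!
Assume `inf C ≤ inf D` and put `E = (C ∩ [inf D, sup C]) ∪ D`. Then `inf E = inf D`, so up to
`inf D` both `δ(E)` and `δ(D)` equal `inf D`, which dominates `δ(C)`. Above `inf D` the set `E`
agrees with `C ∪ D` and all three functions are `t ↦ t` on their set and `0` off it; as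
`t > inf D ≥ 0`, taking the maximum of the values for `C` and `D` gives the value for `C ∪ D`.
-/

open Set

lemma delta_of_le {C : Set ℝ} {t : ℝ} (h : t ≤ sInf C) : delta C t = sInf C := if_pos h

lemma delta_of_lt {C : Set ℝ} {t : ℝ} (h : sInf C < t) :
    delta C t = if t ∈ C then t else 0 := if_neg h.not_ge

lemma delta_le_max {C : Set ℝ} (hC : 0 ≤ sInf C) (t : ℝ) : delta C t ≤ max (sInf C) t := by
  rcases le_or_gt t (sInf C) with ht | ht
  · rw [delta_of_le ht]
    exact le_max_left _ _
  · rw [delta_of_lt ht]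
    split_ifs
    · exact le_max_right _ _
    · exact hC.trans (le_max_left _ _)

lemma sInf_inter_Icc_union {C D : Set ℝ} (hD : D.Nonempty) (hD' : BddBelow D) (u : ℝ) :
    sInf ((C ∩ Icc (sInf D) u) ∪ D) = sInf D := by
  have hlow : sInf D ∈ lowerBounds ((C ∩ Icc (sInf D) u) ∪ D) := by
    rintro x (⟨-, hx, -⟩ | hx)
    exacts [hx, csInf_le hD' hx]
  exact le_antisymm (csInf_le_csInf ⟨_, hlow⟩ hD subset_union_right)
    (le_csInf (hD.mono subset_union_right) hlow)

lemma delta_inter_Icc_union {C D : Set ℝ} (hD : D.Nonempty) (hD' : BddBelow D)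
    (hC : BddAbove C) (hC0 : 0 ≤ sInf C) (hCD : sInf C ≤ sInf D) :
    delta ((C ∩ Icc (sInf D) (sSup C)) ∪ D) = fun t ↦ max (delta C t) (delta D t) := by
  funext t
  have hE := sInf_inter_Icc_union (C := C) hD hD' (sSup C)
  rcases le_or_gt t (sInf D) with ht | ht
  · rw [delta_of_le (ht.trans_eq hE.symm), hE, delta_of_le ht, max_eq_right]
    exact (delta_le_max hC0 t).trans (max_le hCD ht)
  · have hmem : t ∈ (C ∩ Icc (sInf D) (sSup C)) ∪ D ↔ t ∈ C ∨ t ∈ D :=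
      ⟨fun h ↦ h.imp_left And.left, fun h ↦ h.imp_left fun hc ↦ ⟨hc, ht.le, le_csSup hC hc⟩⟩
    have ht0 : 0 ≤ t := (hC0.trans hCD).trans ht.le
    rw [delta_of_lt (hE.trans_lt ht), delta_of_lt (hCD.trans_lt ht), delta_of_lt ht]
    simp only [hmem]
    split_ifs <;> simp_all

theorem stmt_16_general (C D : Set ℝ) (hCne : C.Nonempty) (hDne : D.Nonempty)
    (hC : C ⊆ Set.Icc 0 1) (hD : D ⊆ Set.Icc 0 1) :
    delta (cupC C D) = fun t => max (delta C t) (delta D t) := by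
  have hC0 : 0 ≤ sInf C := Real.sInf_nonneg fun x hx ↦ (hC hx).1
  have hD0 : 0 ≤ sInf D := Real.sInf_nonneg fun x hx ↦ (hD hx).1
  unfold cupC
  split_ifs with hCD
  · exact delta_inter_Icc_union hDne (bddBelow_Icc.mono hD) (bddAbove_Icc.mono hC) hC0 hCD
  · rw [delta_inter_Icc_union hCne (bddBelow_Icc.mono hC) (bddAbove_Icc.mono hD) hD0
      (le_of_not_ge hCD)]
    simp only [max_comm]

theorem stmt_16 (C D : Set ℝ) (hCne : C.Nonempty) (hDne : D.Nonempty)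
    (hC : C ⊆ Set.Icc 0 1) (hD : D ⊆ Set.Icc 0 1)
    (hCc : IsClosed C) (hDc : IsClosed D) :
    delta (cupC C D) = fun t => max (delta C t) (delta D t) :=
  stmt_16_general C D hCne hDne hC hD
end
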